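/- arXiv:1402.1754 — 2 statements merged into one kernel-verified Lean document; each statement's English description precedes it below -/
import Mathlib

section
/- Let b > 1, c ∈ [1,2], h ∈ (0,1], and suppose a ≥ max( h(1/b + c)/(c+3), h(b+1)/((c+3)b) ). With l = N^a and λ = (log N / N)^{h/(c+3)}, the quantity r(l,N,λ) = log^h(l)/(N^h λ^3) + λ^c + 1/(l² λ) + 1/(l λ^{1/b}) is O((log N / N)^{hc/(c+3)}) as N → ∞, and the constraint l ≥ λ^{−1/b − 1} holds for large N. -/
open Filter Real

/-!
Write `x = log N / N`, so `λ = x^t` with `t = h/(c+3)` and the target rate is `x^p` with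
`p = hc/(c+3) = h - 3t`. Once `log N ≥ 1` we have `N⁻¹ ≤ x`, hence `N^(-e) ≤ x^q` whenever
`0 ≤ q ≤ e`. The first term of `r` equals `a^h x^(h-3t) = a^h x^p` and the second is `x^(tc) = x^p`;
the last two are at most `x^p` because the lower bound on `a` gives `p + t ≤ 2a` and
`p + t/b ≤ a`. The same comparison with `t(1/b + 1) ≤ a` yields `λ^(-1/b-1) ≤ N^a`.
-/

lemma inv_le_log_div_self {N : ℝ} (hN : exp 1 ≤ N) : N⁻¹ ≤ log N / N := by
  have hN₀ : 0 < N := (exp_pos 1).trans_le hN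
  rw [inv_eq_one_div]
  exact div_le_div_of_nonneg_right ((le_log_iff_exp_le hN₀).mpr hN) hN₀.le

section InvLe

variable {N x : ℝ}

lemma rpow_neg_le_rpow_of_inv_le (hN : 1 ≤ N) (hx : N⁻¹ ≤ x) {q e : ℝ} (hq : 0 ≤ q)
    (hqe : q ≤ e) : N ^ (-e) ≤ x ^ q :=
  calc N ^ (-e) ≤ N ^ (-q) := rpow_le_rpow_of_exponent_le hN (neg_le_neg hqe)
    _ = N⁻¹ ^ q := by rw [inv_rpow (by positivity), rpow_neg (by positivity)]
    _ ≤ x ^ q := rpow_le_rpow (by positivity) hx hq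

lemma rpow_neg_le_rpow_of_inv_le' (hN : 1 ≤ N) (hx : N⁻¹ ≤ x) {q e : ℝ} (hq : 0 ≤ q)
    (hqe : q ≤ e) : x ^ (-q) ≤ N ^ e := by
  have hx₀ : 0 < x := (inv_pos.2 (by linarith)).trans_le hx
  calc x ^ (-q) = (x ^ q)⁻¹ := rpow_neg hx₀.le q
    _ ≤ (N ^ (-e))⁻¹ := inv_anti₀ (by positivity) (rpow_neg_le_rpow_of_inv_le hN hx hq hqe)
    _ = N ^ e := by rw [rpow_neg (by positivity), inv_inv]

lemma one_div_rpow_mul_rpow_le (hN : 1 ≤ N) (hx : N⁻¹ ≤ x) {e q s : ℝ} (hq : 0 ≤ q)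
    (hs : 0 ≤ s) (hqse : q + s ≤ e) : 1 / (N ^ e * x ^ s) ≤ x ^ q := by
  have hx₀ : 0 < x := (inv_pos.2 (by linarith)).trans_le hx
  rw [div_le_iff₀ (by positivity)]
  calc (1 : ℝ) = N ^ (-e) * N ^ e := by rw [← rpow_add (by positivity)]; simp
    _ ≤ x ^ (q + s) * N ^ e := by
      gcongr
      exact rpow_neg_le_rpow_of_inv_le hN hx (by positivity) hqse
    _ = x ^ q * (N ^ e * x ^ s) := by rw [rpow_add hx₀]; ring

end InvLe

lemma log_rpow_rpow_div_eq {N a : ℝ} (hN : 1 < N) (ha : 0 ≤ a) (h s : ℝ) :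
    log (N ^ a) ^ h / (N ^ h * (log N / N) ^ s) = a ^ h * (log N / N) ^ (h - s) := by
  have hN₀ : 0 < N := by linarith
  rw [log_rpow hN₀]
  set x := log N / N with hx
  have hx₀ : 0 < x := div_pos (log_pos hN) hN₀
  have hlog : log N = x * N := (div_mul_cancel₀ _ hN₀.ne').symm
  rw [hlog, mul_rpow ha (by positivity), mul_rpow hx₀.le hN₀.le, rpow_sub hx₀]
  field_simp

section Rate

variable {a b c h N : ℝ}

lemma rate_le (hb : 0 < b) (hc : 1 ≤ c) (hh : 0 ≤ h) (ha : h * (1 / b + c) / (c + 3) ≤ a)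
    (hN : exp 1 ≤ N) :
    log (N ^ a) ^ h / (N ^ h * ((log N / N) ^ (h / (c + 3))) ^ (3 : ℝ)) +
        ((log N / N) ^ (h / (c + 3))) ^ c +
        1 / ((N ^ a) ^ (2 : ℝ) * (log N / N) ^ (h / (c + 3))) +
        1 / (N ^ a * ((log N / N) ^ (h / (c + 3))) ^ (1 / b)) ≤
      (a ^ h + 3) * (log N / N) ^ (h * c / (c + 3)) := by
  have hN₁ : 1 < N := (one_lt_exp_iff.2 one_pos).trans_le hN
  have hx := inv_le_log_div_self hN
  have hx₀ : 0 ≤ log N / N := (inv_pos.2 (by linarith)).le.trans hx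
  have hc₃ : 0 < c + 3 := by linarith
  have ha₀ : 0 ≤ a := le_trans (by positivity) ha
  have hpt : h * c / (c + 3) + h / (c + 3) ≤ a * 2 := by
    rw [← add_div, div_le_iff₀ hc₃]
    rw [div_le_iff₀ hc₃] at ha
    nlinarith [mul_nonneg hh (one_div_pos.2 hb).le]
  have hptb : h * c / (c + 3) + h / (c + 3) * (1 / b) ≤ a := by
    convert ha using 1; ring
  rw [← rpow_mul hx₀, ← rpow_mul hx₀, ← rpow_mul hx₀, ← rpow_mul (by positivity),
    log_rpow_rpow_div_eq hN₁ ha₀, show h - h / (c + 3) * 3 = h * c / (c + 3) by field_simp; ring,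
    show h / (c + 3) * c = h * c / (c + 3) by ring]
  have h₃ := one_div_rpow_mul_rpow_le hN₁.le hx (by positivity) (by positivity) hpt
  have h₄ := one_div_rpow_mul_rpow_le hN₁.le hx (by positivity) (by positivity) hptb
  linarith

lemma rpow_rpow_neg_le (hb : 0 < b) (hc : 1 ≤ c) (hh : 0 ≤ h)
    (ha : h * (b + 1) / ((c + 3) * b) ≤ a) (hN : exp 1 ≤ N) :
    ((log N / N) ^ (h / (c + 3))) ^ (-1 / b - 1) ≤ N ^ a := by
  have hx := inv_le_log_div_self hN
  have hN₁ : 1 ≤ N := ((one_lt_exp_iff.2 one_pos).trans_le hN).le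
  rw [← rpow_mul ((inv_pos.2 (by linarith)).le.trans hx),
    show h / (c + 3) * (-1 / b - 1) = -(h * (b + 1) / ((c + 3) * b)) by field_simp; ring]
  exact rpow_neg_le_rpow_of_inv_le' hN₁ hx (by positivity) ha

end Rate

theorem stmt16_general (b c h a : ℝ) (hb : 1 < b) (hc : 1 ≤ c)
    (hh : 0 < h)
    (ha : max (h * (1 / b + c) / (c + 3)) (h * (b + 1) / ((c + 3) * b)) ≤ a)
    (l lam r : ℕ → ℝ)
    (hl : ∀ N : ℕ, l N = (N : ℝ) ^ a)
    (hlam : ∀ N : ℕ, lam N = (Real.log N / N) ^ (h / (c + 3)))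
    (hr : ∀ N : ℕ, r N =
      (Real.log (l N)) ^ h / ((N : ℝ) ^ h * lam N ^ (3 : ℝ)) + lam N ^ c +
        1 / (l N ^ (2 : ℝ) * lam N) + 1 / (l N * lam N ^ (1 / b))) :
    (∃ C : ℝ, 0 < C ∧
        ∀ᶠ N : ℕ in atTop, r N ≤ C * (Real.log N / N) ^ (h * c / (c + 3))) ∧
      ∀ᶠ N : ℕ in atTop, lam N ^ (-1 / b - 1) ≤ l N := by
  obtain ⟨ha₁, ha₂⟩ := max_le_iff.mp ha
  have hb₀ : 0 < b := by linarith
  have ha₀ : 0 < a := lt_of_lt_of_le (by positivity) ha₁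
  have hlarge : ∀ᶠ N : ℕ in atTop, exp 1 ≤ (N : ℝ) :=
    tendsto_natCast_atTop_atTop.eventually_ge_atTop _
  refine ⟨⟨a ^ h + 3, by positivity, hlarge.mono fun N hN => ?_⟩, hlarge.mono fun N hN => ?_⟩
  · rw [hr, hl, hlam]
    exact rate_le hb₀ hc hh.le ha₁ hN
  · rw [hl, hlam]
    exact rpow_rpow_neg_le hb₀ hc hh.le ha₂ hN

/-- Rate analysis for the first row of the convergence table.  Let `b > 1`, `c ∈ [1,2]`,
`h ∈ (0,1]`, and `a ≥ max( h(1/b + c)/(c+3), h(b+1)/((c+3)b) )`.  With `l = N^a` and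
`λ = (log N / N)^{h/(c+3)}`, the rate function
`r(l,N,λ) = log^h(l)/(N^h λ³) + λ^c + 1/(l² λ) + 1/(l λ^{1/b})` is
`O((log N / N)^{hc/(c+3)})` as `N → ∞`, and the constraint `l ≥ λ^{−1/b−1}` holds for
large `N`. -/
theorem stmt16 (b c h a : ℝ) (hb : 1 < b) (hc : 1 ≤ c) (hc' : c ≤ 2)
    (hh : 0 < h) (hh' : h ≤ 1)
    (ha : max (h * (1 / b + c) / (c + 3)) (h * (b + 1) / ((c + 3) * b)) ≤ a)
    (l lam r : ℕ → ℝ)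
    (hl : ∀ N : ℕ, l N = (N : ℝ) ^ a)
    (hlam : ∀ N : ℕ, lam N = (Real.log N / N) ^ (h / (c + 3)))
    (hr : ∀ N : ℕ, r N =
      (Real.log (l N)) ^ h / ((N : ℝ) ^ h * lam N ^ (3 : ℝ)) + lam N ^ c +
        1 / (l N ^ (2 : ℝ) * lam N) + 1 / (l N * lam N ^ (1 / b))) :
    (∃ C : ℝ, 0 < C ∧
        ∀ᶠ N : ℕ in atTop, r N ≤ C * (Real.log N / N) ^ (h * c / (c + 3))) ∧
      ∀ᶠ N : ℕ in atTop, lam N ^ (-1 / b - 1) ≤ l N :=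
  stmt16_general b c h a hb hc hh ha l lam r hl hlam hr
end

section
/- Let T, T_x be positive self-adjoint bounded operators on H with ‖(T − T_x)(T + λ)⁻¹‖ ≤ 1/2 and λ > 0. Then ‖√T (T_x + λ)⁻¹‖ ≤ 2 ‖√T (T + λ)⁻¹‖ ≤ 2/(2√λ) = 1/√λ; more generally, if additionally ‖(T_x − T_{x̂})(T_x+λ)⁻¹‖ ≤ 1/2, then ‖√T (T_{x̂} + λ)⁻¹‖ ≤ 2/√λ. -/
/-!
Writing `R = (T + λ)⁻¹`, the bound `‖√T R‖ ≤ 1/(2√λ)` comes from the polarization identity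
`‖Tg + λg‖² - ‖Tg - λg‖² = 4λ⟪Tg, g⟫ = 4λ‖√T g‖²`. Passing to another resolvent
`R' = (T' + λ)⁻¹` costs at most a factor `2`: `√T R' = √T R · (T + λ)R'` and
`(T + λ)R' = (T - T')R · (T + λ)R' + 1`, so `‖(T - T')R‖ ≤ 1/2` forces `‖(T + λ)R'‖ ≤ 2`.
-/

open scoped RealInnerProductSpace

section NormedRing

variable {R : Type*} [NormedRing R]

theorem norm_le_two_of_eq_mul_add_one {A B : R} (h1 : ‖(1 : R)‖ ≤ 1) (hA : ‖A‖ ≤ 1 / 2)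
    (hB : B = A * B + 1) : ‖B‖ ≤ 2 := by
  have : ‖B‖ ≤ ‖A‖ * ‖B‖ + 1 :=
    calc ‖B‖ = ‖A * B + 1‖ := congrArg norm hB
      _ ≤ ‖A * B‖ + ‖(1 : R)‖ := norm_add_le _ _
      _ ≤ ‖A‖ * ‖B‖ + 1 := add_le_add (norm_mul_le _ _) h1
  nlinarith [norm_nonneg B]

theorem mul_right_inverse_eq_mul_add_one {a b r r' : R} (hr : r * a = 1) (hr' : b * r' = 1) :
    a * r' = (a - b) * r * (a * r') + 1 := by
  rw [mul_assoc, ← mul_assoc r, hr, one_mul, sub_mul, hr', sub_add_cancel]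

theorem norm_mul_right_inverse_le_two_mul {a b r r' : R} (h1 : ‖(1 : R)‖ ≤ 1)
    (hr : r * a = 1) (hr' : b * r' = 1) (hab : ‖(a - b) * r‖ ≤ 1 / 2) (x : R) :
    ‖x * r'‖ ≤ 2 * ‖x * r‖ := by
  have hB : ‖a * r'‖ ≤ 2 :=
    norm_le_two_of_eq_mul_add_one h1 hab (mul_right_inverse_eq_mul_add_one hr hr')
  calc ‖x * r'‖ = ‖x * r * (a * r')‖ := by rw [mul_assoc, ← mul_assoc r, hr, one_mul]
    _ ≤ ‖x * r‖ * ‖a * r'‖ := norm_mul_le _ _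
    _ ≤ 2 * ‖x * r‖ := by nlinarith [norm_nonneg (x * r)]

end NormedRing

section InnerProductSpace

variable {H : Type*} [NormedAddCommGroup H] [InnerProductSpace ℝ H]

theorem four_mul_inner_le_norm_add_sq (u v : H) : 4 * ⟪u, v⟫ ≤ ‖u + v‖ ^ 2 := by
  have hpol : ‖u + v‖ ^ 2 - ‖u - v‖ ^ 2 = 4 * ⟪u, v⟫ := by
    rw [norm_add_sq_real, norm_sub_sq_real]
    ring
  nlinarith [sq_nonneg ‖u - v‖]

theorem norm_mul_resolvent_le {S R : H →L[ℝ] H} (hS : (S : H →ₗ[ℝ] H).IsSymmetric) {lam : ℝ}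
    (hlam : 0 < lam) (hR : (S * S + lam • (1 : H →L[ℝ] H)) * R = 1) :
    ‖S * R‖ ≤ 1 / (2 * Real.sqrt lam) := by
  have hsqrt : 0 < Real.sqrt lam := Real.sqrt_pos.mpr hlam
  refine ContinuousLinearMap.opNorm_le_bound _ (by positivity) fun f => ?_
  set g := R f
  have hf : S (S g) + lam • g = f := by
    simpa using congrArg (fun A : H →L[ℝ] H => A f) hR
  have hSS : ⟪S (S g), lam • g⟫ = lam * ‖S g‖ ^ 2 := by
    rw [real_inner_smul_right, ← ContinuousLinearMap.coe_coe S, hS, real_inner_self_eq_norm_sq]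
  have hkey : (2 * Real.sqrt lam * ‖S g‖) ^ 2 ≤ ‖f‖ ^ 2 := by
    have := four_mul_inner_le_norm_add_sq (S (S g)) (lam • g)
    rw [hSS, hf] at this
    nlinarith [Real.sq_sqrt hlam.le]
  rw [mul_apply_eq_comp, div_mul_eq_mul_div, one_mul, le_div_iff₀ (by positivity), mul_comm]
  exact (abs_le_of_sq_le_sq' hkey (norm_nonneg f)).2

end InnerProductSpace

theorem stmt18_general {H : Type*} [NormedAddCommGroup H] [InnerProductSpace ℝ H] [CompleteSpace H]
    (T Tx Txh sqrtT Rinv RinvX RinvXh : H →L[ℝ] H)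
    (hs : IsSelfAdjoint sqrtT)
    (hsq : sqrtT * sqrtT = T)
    (lam : ℝ) (hlam : 0 < lam)
    (hinv₁ : (T + lam • (1 : H →L[ℝ] H)) * Rinv = 1)
    (hinv₂ : Rinv * (T + lam • (1 : H →L[ℝ] H)) = 1)
    (hinvX₁ : (Tx + lam • (1 : H →L[ℝ] H)) * RinvX = 1)
    (hinvX₂ : RinvX * (Tx + lam • (1 : H →L[ℝ] H)) = 1)
    (hinvXh₁ : (Txh + lam • (1 : H →L[ℝ] H)) * RinvXh = 1)
    (hpert : ‖(T - Tx) * Rinv‖ ≤ 1 / 2) :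
    (‖sqrtT * RinvX‖ ≤ 2 * ‖sqrtT * Rinv‖ ∧ 2 * ‖sqrtT * Rinv‖ ≤ 1 / Real.sqrt lam) ∧
      (‖(Tx - Txh) * RinvX‖ ≤ 1 / 2 → ‖sqrtT * RinvXh‖ ≤ 2 / Real.sqrt lam) := by
  have h1 : ‖(1 : H →L[ℝ] H)‖ ≤ 1 := ContinuousLinearMap.norm_id_le
  have hR : ‖sqrtT * Rinv‖ ≤ 1 / (2 * Real.sqrt lam) :=
    norm_mul_resolvent_le hs.isSymmetric hlam (hsq ▸ hinv₁)
  have hRX : ‖sqrtT * RinvX‖ ≤ 2 * ‖sqrtT * Rinv‖ :=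
    norm_mul_right_inverse_le_two_mul h1 hinv₂ hinvX₁ (by rwa [add_sub_add_right_eq_sub]) sqrtT
  have hR' : 2 * ‖sqrtT * Rinv‖ ≤ 1 / Real.sqrt lam := by
    have : 2 * (1 / (2 * Real.sqrt lam)) = 1 / Real.sqrt lam := by field_simp
    linarith
  refine ⟨⟨hRX, hR'⟩, fun hpert' => ?_⟩
  have hRXh : ‖sqrtT * RinvXh‖ ≤ 2 * ‖sqrtT * RinvX‖ :=
    norm_mul_right_inverse_le_two_mul h1 hinvX₂ hinvXh₁ (by rwa [add_sub_add_right_eq_sub])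
      sqrtT
  calc ‖sqrtT * RinvXh‖ ≤ 2 * (1 / Real.sqrt lam) := by linarith
    _ = 2 / Real.sqrt lam := by ring

/-- Let `T`, `T_x`, `T_x̂` be positive self-adjoint bounded operators on `H` and `λ > 0`, with
`‖(T − T_x)(T + λ)⁻¹‖ ≤ 1/2`.  Then `‖√T (T_x + λ)⁻¹‖ ≤ 2 ‖√T (T + λ)⁻¹‖ ≤ 1/√λ`; moreover,
if additionally `‖(T_x − T_x̂)(T_x + λ)⁻¹‖ ≤ 1/2`, then `‖√T (T_x̂ + λ)⁻¹‖ ≤ 2/√λ`. -/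
theorem stmt18 {H : Type*} [NormedAddCommGroup H] [InnerProductSpace ℝ H] [CompleteSpace H]
    (T Tx Txh sqrtT Rinv RinvX RinvXh : H →L[ℝ] H)
    (hT : IsSelfAdjoint T) (hTpos : ∀ f : H, 0 ≤ ⟪T f, f⟫)
    (hTx : IsSelfAdjoint Tx) (hTxpos : ∀ f : H, 0 ≤ ⟪Tx f, f⟫)
    (hTxh : IsSelfAdjoint Txh) (hTxhpos : ∀ f : H, 0 ≤ ⟪Txh f, f⟫)
    (hs : IsSelfAdjoint sqrtT) (hspos : ∀ f : H, 0 ≤ ⟪sqrtT f, f⟫)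
    (hsq : sqrtT * sqrtT = T)
    (lam : ℝ) (hlam : 0 < lam)
    (hinv₁ : (T + lam • (1 : H →L[ℝ] H)) * Rinv = 1)
    (hinv₂ : Rinv * (T + lam • (1 : H →L[ℝ] H)) = 1)
    (hinvX₁ : (Tx + lam • (1 : H →L[ℝ] H)) * RinvX = 1)
    (hinvX₂ : RinvX * (Tx + lam • (1 : H →L[ℝ] H)) = 1)
    (hinvXh₁ : (Txh + lam • (1 : H →L[ℝ] H)) * RinvXh = 1)
    (hinvXh₂ : RinvXh * (Txh + lam • (1 : H →L[ℝ] H)) = 1)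
    (hpert : ‖(T - Tx) * Rinv‖ ≤ 1 / 2) :
    (‖sqrtT * RinvX‖ ≤ 2 * ‖sqrtT * Rinv‖ ∧ 2 * ‖sqrtT * Rinv‖ ≤ 1 / Real.sqrt lam) ∧
      (‖(Tx - Txh) * RinvX‖ ≤ 1 / 2 → ‖sqrtT * RinvXh‖ ≤ 2 / Real.sqrt lam) :=
  stmt18_general T Tx Txh sqrtT Rinv RinvX RinvXh hs hsq lam hlam hinv₁ hinv₂ hinvX₁ hinvX₂ hinvXh₁
    hpert
end
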